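/- Every continuous and dually epi-translation invariant valuation Z : Conv_od(ℝⁿ) → ℝ is constant, where Conv_od(ℝⁿ) is the set of functions in Conv(ℝⁿ) whose effective domain contains the origin in its interior. -/

import Mathlib

open Filter Topology MeasureTheory

noncomputable section

/-- Euclidean space `ℝⁿ`. -/
abbrev Vn (n : ℕ) := EuclideanSpace ℝ (Fin n)

/-- `u : ℝⁿ → ℝ ∪ {+∞}` (represented as an `EReal`-valued function that never
takes the value `⊥ = -∞`) is convex. -/
def IsConvexFn {n : ℕ} (u : Vn n → EReal) : Prop :=
  ∀ x y : Vn n, ∀ t : ℝ, 0 < t → t < 1 →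
    u (t • x + (1 - t) • y) ≤ (t : EReal) * u x + ((1 - t : ℝ) : EReal) * u y

/-- `Conv(ℝⁿ)`: convex, lower semicontinuous, proper functions
`ℝⁿ → ℝ ∪ {+∞}`. -/
def ConvSet (n : ℕ) : Set (Vn n → EReal) :=
  {u | IsConvexFn u ∧ LowerSemicontinuous u ∧ (∀ x, u x ≠ ⊥) ∧ (∃ x, u x ≠ ⊤)}

/-- `Conv_sc(ℝⁿ)`: super-coercive elements of `Conv(ℝⁿ)`, i.e.
`u(x)/|x| → +∞` as `|x| → +∞`. -/
def ConvSc (n : ℕ) : Set (Vn n → EReal) :=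
  {u | u ∈ ConvSet n ∧
    ∀ M : ℝ, ∃ R : ℝ, ∀ x : Vn n, R ≤ ‖x‖ → ((M * ‖x‖ : ℝ) : EReal) ≤ u x}

/-- Epi-convergence of a sequence `uk` to `u`. -/
def EpiConverges {n : ℕ} (uk : ℕ → Vn n → EReal) (u : Vn n → EReal) : Prop :=
  ∀ x : Vn n,
    (∀ xk : ℕ → Vn n, Tendsto xk atTop (𝓝 x) →
      u x ≤ liminf (fun k => uk k (xk k)) atTop) ∧
    (∃ xk : ℕ → Vn n, Tendsto xk atTop (𝓝 x) ∧
      Tendsto (fun k => uk k (xk k)) atTop (𝓝 (u x)))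

/-- Continuity (with respect to epi-convergence) of a functional on a class `X`. -/
def ContinuousVal {n : ℕ} (X : Set (Vn n → EReal)) (Z : (Vn n → EReal) → ℝ) : Prop :=
  ∀ (uk : ℕ → Vn n → EReal) (u : Vn n → EReal),
    (∀ k, uk k ∈ X) → u ∈ X → EpiConverges uk u →
      Tendsto (fun k => Z (uk k)) atTop (𝓝 (Z u))

/-- The valuation property on a class `X` (here `⊔`, `⊓` are the pointwise
maximum and minimum). -/
def IsValuation {n : ℕ} (X : Set (Vn n → EReal)) (Z : (Vn n → EReal) → ℝ) : Prop :=
  ∀ u v : Vn n → EReal, u ∈ X → v ∈ X → u ⊔ v ∈ X → u ⊓ v ∈ X →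
    Z (u ⊔ v) + Z (u ⊓ v) = Z u + Z v

/-- Epi-translation invariance: invariance under `u ↦ u(· - x₀) + c`. -/
def EpiTranslationInvariant {n : ℕ} (X : Set (Vn n → EReal)) (Z : (Vn n → EReal) → ℝ) : Prop :=
  ∀ u ∈ X, ∀ x₀ : Vn n, ∀ c : ℝ, Z (fun x => u (x - x₀) + (c : EReal)) = Z u

-- Epi-multiplication `λ ⊡ u`; for `λ = 0` it is the indicator of `{0}`.
open Classical in
def epiMul {n : ℕ} (l : ℝ) (u : Vn n → EReal) : Vn n → EReal :=
  if l = 0 then (fun x => if x = 0 then (0 : EReal) else ⊤)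
  else fun x => (l : EReal) * u (l⁻¹ • x)

/-- `Z` is epi-homogeneous of degree `α`: `Z(λ ⊡ u) = λ^α Z(u)` for `λ > 0`. -/
def EpiHomogeneous {n : ℕ} (X : Set (Vn n → EReal)) (Z : (Vn n → EReal) → ℝ) (α : ℝ) : Prop :=
  ∀ u ∈ X, ∀ l : ℝ, 0 < l → Z (epiMul l u) = l ^ α * Z u

/-- `Conv_od(ℝⁿ)`: functions in `Conv(ℝⁿ)` whose effective domain contains
the origin in its interior. -/
def ConvOd (n : ℕ) : Set (Vn n → EReal) :=
  {u | u ∈ ConvSet n ∧ (0 : Vn n) ∈ interior {x : Vn n | u x ≠ ⊤}}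

/-- Dual epi-translation invariance for extended-real-valued functions:
invariance under addition of affine functions `u ↦ u + ℓ + c`. -/
def DuallyEpiTranslationInvariantE {n : ℕ} (X : Set (Vn n → EReal))
    (Z : (Vn n → EReal) → ℝ) : Prop :=
  ∀ u ∈ X, ∀ ℓ : Vn n →ₗ[ℝ] ℝ, ∀ c : ℝ,
    Z (fun x => u x + (ℓ x : EReal) + (c : EReal)) = Z u

/-!
Adding a ramp `t (ℓ - β)⁺` with `β > 0` does not change `Z`. Indeed, with `I_{ℓ ≤ β}` the convex
indicator of the half-space, the valuation property applied to `v + t (β - ℓ)⁺` and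
`v + I_{ℓ ≤ β}`, whose minimum is `v` and whose maximum is an affine perturbation of
`v + I_{ℓ ≤ β}`, gives this for `t (β - ℓ)⁺`, and the two ramps differ by an affine function.
Letting `t → ∞`, continuity shows that restricting `v` to a half-space `{ℓ ≤ β}` does not change
`Z` either, hence neither does restricting it to a small polytope around the origin: `Z v` only
depends on the germ of `v` at `0`. If the affine function `A` supports `u` at the interior point
`0` of its domain, then `A ⊔ (u - 1/(k+1))` agrees with `A` near `0` and increases to `u`, so
`Z u = Z A = Z 0`.
-/

open Set

/-- The indicator function of convex analysis: `0` on `s` and `+∞` off `s`. -/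
def convexIndicator {α : Type*} (s : Set α) : α → EReal := sᶜ.indicator fun _ => ⊤

section convexIndicator

variable {α : Type*} {s t : Set α} {x : α}

lemma convexIndicator_of_mem (hx : x ∈ s) : convexIndicator s x = 0 :=
  indicator_of_notMem (notMem_compl_iff.2 hx) _

lemma convexIndicator_of_notMem (hx : x ∉ s) : convexIndicator s x = ⊤ :=
  indicator_of_mem hx _

lemma convexIndicator_nonneg (x : α) : 0 ≤ convexIndicator s x :=
  indicator_nonneg (fun _ _ => le_top) x

lemma convexIndicator_ne_bot (x : α) : convexIndicator s x ≠ ⊥ :=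
  ne_bot_of_le_ne_bot EReal.zero_ne_bot (convexIndicator_nonneg x)

lemma convexIndicator_univ : convexIndicator (univ : Set α) = 0 := by
  ext x; exact convexIndicator_of_mem (mem_univ x)

lemma convexIndicator_inter :
    convexIndicator (s ∩ t) = convexIndicator s + convexIndicator t := by
  ext x
  by_cases hs : x ∈ s
  · by_cases ht : x ∈ t
    · simp [convexIndicator_of_mem, hs, ht]
    · simp [convexIndicator_of_notMem, convexIndicator_of_mem, hs, ht]
  · simp [convexIndicator_of_notMem, hs, EReal.top_add_of_ne_bot, convexIndicator_ne_bot]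

end convexIndicator

section

variable {n : ℕ}

namespace IsConvexFn

variable {u v : Vn n → EReal}

lemma add (hu : IsConvexFn u) (hv : IsConvexFn v) : IsConvexFn (u + v) := by
  intro x y t ht ht1
  have hdistrib (r : ℝ) (hr : 0 < r) (a b : EReal) : (r : EReal) * (a + b) = r * a + r * b :=
    EReal.left_distrib_of_nonneg_of_ne_top (by exact_mod_cast hr.le) (EReal.coe_ne_top r) a b
  simp only [Pi.add_apply, hdistrib t ht, hdistrib (1 - t) (by linarith)]
  rw [add_add_add_comm]
  exact add_le_add (hu x y t ht ht1) (hv x y t ht ht1)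

lemma sup (hu : IsConvexFn u) (hv : IsConvexFn v) : IsConvexFn (u ⊔ v) := by
  intro x y t ht ht1
  have ht' : (0 : EReal) ≤ t := EReal.coe_nonneg.2 ht.le
  have ht1' : (0 : EReal) ≤ ((1 - t : ℝ) : EReal) := EReal.coe_nonneg.2 (by linarith)
  refine sup_le ((hu x y t ht ht1).trans ?_) ((hv x y t ht ht1).trans ?_) <;> gcongr <;> simp

end IsConvexFn

namespace ConvOd

variable {u v : Vn n → EReal}

lemma of_isConvexFn (hconv : IsConvexFn u) (hlsc : LowerSemicontinuous u)
    (hbot : ∀ x, u x ≠ ⊥) (h0 : (0 : Vn n) ∈ interior {x | u x ≠ ⊤}) : u ∈ ConvOd n :=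
  ⟨⟨hconv, hlsc, hbot, 0, interior_subset h0⟩, h0⟩

lemma ne_bot (hu : u ∈ ConvOd n) (x : Vn n) : u x ≠ ⊥ := hu.1.2.2.1 x

lemma lowerSemicontinuous (hu : u ∈ ConvOd n) : LowerSemicontinuous u := hu.1.2.1

lemma add_mem (hu : u ∈ ConvOd n) (hv : v ∈ ConvOd n) : u + v ∈ ConvOd n := by
  refine of_isConvexFn (hu.1.1.add hv.1.1)
    ((lowerSemicontinuous hu).add' (lowerSemicontinuous hv) fun x =>
      EReal.continuousAt_add (.inr (ne_bot hv x)) (.inl (ne_bot hu x)))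
    (fun x => EReal.add_ne_bot_iff.2 ⟨ne_bot hu x, ne_bot hv x⟩) ?_
  have hdom : {x | (u + v) x ≠ ⊤} = {x | u x ≠ ⊤} ∩ {x | v x ≠ ⊤} := by
    ext x; exact EReal.add_ne_top_iff_ne_top₂ (ne_bot hu x) (ne_bot hv x)
  rw [hdom, interior_inter]
  exact ⟨hu.2, hv.2⟩

lemma sup_mem (hu : u ∈ ConvOd n) (hv : v ∈ ConvOd n) : u ⊔ v ∈ ConvOd n := by
  refine of_isConvexFn (hu.1.1.sup hv.1.1)
    ((lowerSemicontinuous hu).sup (lowerSemicontinuous hv))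
    (fun x h => ne_bot hu x (eq_bot_mono le_sup_left h)) ?_
  have hdom : {x | (u ⊔ v) x ≠ ⊤} = {x | u x ≠ ⊤} ∩ {x | v x ≠ ⊤} := by
    ext x; simp [← lt_top_iff_ne_top]
  rw [hdom, interior_inter]
  exact ⟨hu.2, hv.2⟩

lemma coe_mem {g : Vn n → ℝ} (hg : ConvexOn ℝ univ g) (hgc : Continuous g) :
    (fun x => (g x : EReal)) ∈ ConvOd n := by
  refine of_isConvexFn (fun x y t ht ht1 => ?_)
    (continuous_coe_real_ereal.comp hgc).lowerSemicontinuous (fun x => EReal.coe_ne_bot _) ?_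
  · exact_mod_cast hg.2 (mem_univ x) (mem_univ y) ht.le (by linarith) (by ring)
  · simp

lemma convexIndicator_mem {s : Set (Vn n)} (hs : Convex ℝ s) (hsc : IsClosed s)
    (h0 : (0 : Vn n) ∈ interior s) : convexIndicator s ∈ ConvOd n := by
  have hdom : {x | convexIndicator s x ≠ ⊤} = s := by
    ext x
    by_cases hx : x ∈ s <;> simp [hx, convexIndicator_of_mem, convexIndicator_of_notMem]
  refine of_isConvexFn (fun x y t ht ht1 => ?_)
    (hsc.isOpen_compl.lowerSemicontinuous_indicator le_top) convexIndicator_ne_bot (by rwa [hdom])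
  by_cases hxy : x ∈ s ∧ y ∈ s
  · rw [convexIndicator_of_mem (hs hxy.1 hxy.2 ht.le (by linarith) (by ring))]
    simp [convexIndicator_of_mem, hxy]
  · have hnonneg (r : ℝ) (hr : 0 < r) (z : Vn n) : 0 ≤ (r : EReal) * convexIndicator s z :=
      EReal.mul_nonneg (by exact_mod_cast hr.le) (convexIndicator_nonneg z)
    rcases not_and_or.1 hxy with hx | hy
    · rw [convexIndicator_of_notMem hx, EReal.coe_mul_top_of_pos ht,
        EReal.top_add_of_ne_bot (ne_bot_of_le_ne_bot EReal.zero_ne_bot (hnonneg _ (by linarith) y))]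
      exact le_top
    · rw [convexIndicator_of_notMem hy, EReal.coe_mul_top_of_pos (by linarith),
        EReal.add_top_of_ne_bot (ne_bot_of_le_ne_bot EReal.zero_ne_bot (hnonneg _ ht x))]
      exact le_top

end ConvOd

lemma epiConverges_of_monotone {w : ℕ → Vn n → EReal} {u : Vn n → EReal}
    (hlsc : ∀ k, LowerSemicontinuous (w k)) (hmono : Monotone w)
    (hlim : ∀ x, Tendsto (fun k => w k x) atTop (𝓝 (u x))) : EpiConverges w u := by
  intro x
  refine ⟨fun xk hxk => ?_, fun _ => x, tendsto_const_nhds, hlim x⟩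
  rw [← iSup_eq_of_tendsto (fun a b h => hmono h x) (hlim x)]
  refine iSup_le fun m => ?_
  calc w m x ≤ liminf (fun k => w m (xk k)) atTop :=
        (LowerSemicontinuousAt.le_liminf (hlsc m x)).trans hxk.liminf_le_liminf_comp
    _ ≤ liminf (fun k => w k (xk k)) atTop :=
        liminf_le_liminf ((eventually_ge_atTop m).mono fun k hk => hmono hk (xk k))

lemma ContinuousVal.eq_of_epiConverges {X : Set (Vn n → EReal)} {Z : (Vn n → EReal) → ℝ}
    (hcont : ContinuousVal X Z) {w : ℕ → Vn n → EReal} {u : Vn n → EReal} {c : ℝ}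
    (hw : ∀ k, w k ∈ X) (hu : u ∈ X) (hepi : EpiConverges w u) (hZ : ∀ k, Z (w k) = c) :
    Z u = c :=
  tendsto_nhds_unique ((hcont w u hw hu hepi).congr hZ) tendsto_const_nhds

lemma convexOn_ramp {E : Type*} [AddCommGroup E] [Module ℝ E] (L : E →ₗ[ℝ] ℝ) (β : ℝ)
    {t : ℝ} (ht : 0 ≤ t) : ConvexOn ℝ univ fun z => t * max (L z - β) 0 := by
  simpa using (((L.convexOn convex_univ).sub (concaveOn_const β convex_univ)).sup
    (convexOn_const 0 convex_univ)).smul ht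

namespace ConvOd

lemma coe_ramp_mem (L : Vn n →ₗ[ℝ] ℝ) (β : ℝ) {t : ℝ} (ht : 0 ≤ t) :
    (fun z => ((t * max (L z - β) 0 : ℝ) : EReal)) ∈ ConvOd n :=
  coe_mem (convexOn_ramp L β ht)
    (continuous_const.mul ((L.continuous_of_finiteDimensional.sub continuous_const).max
      continuous_const))

lemma convexIndicator_halfspace_mem (L : Vn n →ₗ[ℝ] ℝ) {β : ℝ} (hβ : 0 < β) :
    convexIndicator {z | L z ≤ β} ∈ ConvOd n := by
  have hL : Continuous L := L.continuous_of_finiteDimensional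
  have h0 : (0 : Vn n) ∈ interior {z | L z < β} := by
    rw [(isOpen_lt hL continuous_const).interior_eq]
    simpa using hβ
  exact convexIndicator_mem (convex_halfSpace_le L.isLinear β) (isClosed_le hL continuous_const)
    (interior_mono (ofPred_subset_ofPred.2 fun _ => le_of_lt) h0)

end ConvOd

lemma exists_polyhedron_subset_ball {ρ : ℝ} (hρ : 0 < ρ) :
    ∃ S : Finset (Vn n →ₗ[ℝ] ℝ), ∃ δ > 0, {z | ∀ L ∈ S, L z ≤ δ} ⊆ Metric.ball 0 ρ := by
  classical
  set δ := ρ / (√n + 1)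
  let proj (i : Fin n) : Vn n →ₗ[ℝ] ℝ := EuclideanSpace.projₗ i
  refine ⟨Finset.univ.image proj ∪ Finset.univ.image (-proj ·), δ, by positivity, fun z hz => ?_⟩
  have hcoord (i : Fin n) : ‖z i‖ ≤ δ := by
    have h1 : z i ≤ δ :=
      hz _ (Finset.mem_union_left _ (Finset.mem_image_of_mem _ (Finset.mem_univ i)))
    have h2 : -z i ≤ δ :=
      hz _ (Finset.mem_union_right _ (Finset.mem_image_of_mem _ (Finset.mem_univ i)))
    rw [Real.norm_eq_abs, abs_le]
    constructor <;> linarith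
  rw [mem_ball_zero_iff]
  calc ‖z‖ ≤ √(Fintype.card (Fin n)) * ⨆ i, ‖inner ℝ (EuclideanSpace.basisFun (Fin n) ℝ i) z‖ :=
        (EuclideanSpace.basisFun (Fin n) ℝ).norm_le_card_mul_iSup_norm_inner z
    _ ≤ √n * δ := by
        simp only [Fintype.card_fin, EuclideanSpace.basisFun_inner]
        gcongr
        exact Real.iSup_le hcoord (by positivity)
    _ < ρ := by
        rw [mul_div_assoc', div_lt_iff₀ (by positivity)]
        linarith

theorem ConvexOn.exists_subgradient_of_isOpen {E : Type*} [NormedAddCommGroup E]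
    [NormedSpace ℝ E] {s : Set E} {f : E → ℝ} (hf : ConvexOn ℝ s f) (hs : IsOpen s)
    (hfc : ContinuousOn f s) {x : E} (hx : x ∈ s) :
    ∃ g : E →L[ℝ] ℝ, ∀ y ∈ s, f x + g (y - x) ≤ f y := by
  set T := {p : E × ℝ | p.1 ∈ s ∧ f p.1 < p.2}
  have hT : IsOpen T := by
    have hφ : ContinuousOn (fun p : E × ℝ => p.2 - f p.1) (s ×ˢ univ) :=
      continuousOn_snd.sub (hfc.comp continuousOn_fst fun p hp => hp.1)
    convert hφ.isOpen_inter_preimage (hs.prod isOpen_univ) (isOpen_Ioi (a := 0)) using 1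
    ext p
    simp [T, sub_pos]
  obtain ⟨F, hF⟩ := geometric_hahn_banach_point_open hf.convex_strict_epigraph hT
    (fun h => lt_irrefl _ h.2 : (x, f x) ∉ T)
  have hF_apply (y : E) (r : ℝ) : F (y, r) = F (y, 0) + r * F (0, 1) := by
    rw [← smul_eq_mul, ← map_smul, ← map_add]
    simp
  set c := F (0, 1)
  have hc : 0 < c := by
    have h := hF (x, f x + 1) ⟨hx, by linarith⟩
    rw [hF_apply x (f x), hF_apply x (f x + 1)] at h
    linarith
  refine ⟨-c⁻¹ • F.comp (.inl ℝ E ℝ), fun y hy => le_of_forall_pos_lt_add fun ε hε => ?_⟩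
  have h := hF (y, f y + ε) ⟨hy, by linarith⟩
  rw [hF_apply x, hF_apply y] at h
  have hg : (-c⁻¹ • F.comp (.inl ℝ E ℝ)) (y - x) = (F (x, 0) - F (y, 0)) / c := by
    simp [map_sub]
    field_simp
    ring
  rw [hg, add_div' _ _ _ hc.ne', div_lt_iff₀ hc]
  linarith

namespace IsConvexFn

variable {u : Vn n → EReal}

lemma convexOn_toReal (hu : IsConvexFn u) {s : Set (Vn n)} (hs : Convex ℝ s)
    (hfin : ∀ x ∈ s, u x ≠ ⊤ ∧ u x ≠ ⊥) : ConvexOn ℝ s fun x => (u x).toReal := by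
  refine convexOn_iff_forall_pos.2 ⟨hs, fun x hx y hy a b ha hb hab => ?_⟩
  obtain rfl : b = 1 - a := by linarith
  have hcoe {z} (hz : z ∈ s) : u z = ((u z).toReal : EReal) :=
    (EReal.coe_toReal (hfin z hz).1 (hfin z hz).2).symm
  have h := hu x y a ha (by linarith)
  rw [hcoe hx, hcoe hy, hcoe (hs hx hy ha.le hb.le hab)] at h
  exact_mod_cast h

lemma le_of_eventually_le (hu : IsConvexFn u) (hbot : ∀ x, u x ≠ ⊥) {a : ℝ} (h0 : u 0 = a)
    (G : Vn n →ₗ[ℝ] ℝ) (hloc : ∀ᶠ z in 𝓝 0, ((a + G z : ℝ) : EReal) ≤ u z) (z : Vn n) :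
    ((a + G z : ℝ) : EReal) ≤ u z := by
  rcases eq_or_ne (u z) ⊤ with hz | hz
  · simp [hz]
  have hsmul : Tendsto (fun t : ℝ => t • z) (𝓝[>] 0) (𝓝 0) :=
    tendsto_nhdsWithin_of_tendsto_nhds
      ((continuous_id.smul continuous_const).tendsto' 0 0 (zero_smul ℝ z))
  obtain ⟨t, hle, ht0, ht1⟩ := ((hsmul.eventually hloc).and
    ((Ioo_mem_nhdsGT (zero_lt_one' ℝ)))).exists
  have hconv := hu z 0 t ht0 ht1
  rw [smul_zero, add_zero] at hconv
  replace hconv := hle.trans hconv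
  rw [h0, ← EReal.coe_toReal hz (hbot z), map_smul, smul_eq_mul] at hconv
  have hr : t * (a + G z) ≤ t * (u z).toReal := by
    have : a + t * G z ≤ t * (u z).toReal + (1 - t) * a := by exact_mod_cast hconv
    linarith
  rw [← EReal.coe_toReal hz (hbot z)]
  exact_mod_cast le_of_mul_le_mul_left hr ht0

end IsConvexFn

lemma ConvOd.exists_supporting_affine {u : Vn n → EReal} (hu : u ∈ ConvOd n) :
    ∃ G : Vn n →ₗ[ℝ] ℝ, (∀ z, (((u 0).toReal + G z : ℝ) : EReal) ≤ u z) ∧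
      ∀ ε : ℝ, 0 < ε → ∀ᶠ z in 𝓝 0, u z ≤ (((u 0).toReal + G z : ℝ) : EReal) + (ε : EReal) := by
  obtain ⟨δ, hδ, hball⟩ := Metric.mem_nhds_iff.1 (mem_interior_iff_mem_nhds.1 hu.2)
  set f : Vn n → ℝ := fun z => (u z).toReal
  have hcoe {z} (hz : z ∈ Metric.ball 0 δ) : u z = f z :=
    (EReal.coe_toReal (hball hz) (ConvOd.ne_bot hu z)).symm
  have hf : ConvexOn ℝ (Metric.ball 0 δ) f :=
    hu.1.1.convexOn_toReal (convex_ball 0 δ) fun z hz => ⟨hball hz, ConvOd.ne_bot hu z⟩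
  have hfc := hf.continuousOn Metric.isOpen_ball
  obtain ⟨g, hg⟩ := hf.exists_subgradient_of_isOpen Metric.isOpen_ball hfc (Metric.mem_ball_self hδ)
  have hball_nhds := Metric.ball_mem_nhds (0 : Vn n) hδ
  refine ⟨g, hu.1.1.le_of_eventually_le (ConvOd.ne_bot hu) (hcoe (Metric.mem_ball_self hδ)) g ?_,
    fun ε hε => ?_⟩
  · filter_upwards [hball_nhds] with z hz
    rw [hcoe hz]
    exact_mod_cast by simpa using hg z hz
  · have hlim : Tendsto (fun z => f z - g z) (𝓝 0) (𝓝 (f 0 - g 0)) :=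
      (hfc.continuousAt hball_nhds).sub g.continuous.continuousAt
    filter_upwards [hball_nhds, hlim.eventually_lt_const (u := f 0 + ε) (by simpa using hε)]
      with z hz hlt
    rw [hcoe hz, ← EReal.coe_add]
    exact_mod_cast (by linarith : f z ≤ f 0 + g z + ε)

section Valuation

variable {Z : (Vn n → EReal) → ℝ}

lemma Z_add_ramp (hval : IsValuation (ConvOd n) Z)
    (hinv : DuallyEpiTranslationInvariantE (ConvOd n) Z) {v : Vn n → EReal} (hv : v ∈ ConvOd n)
    (L : Vn n →ₗ[ℝ] ℝ) {β t : ℝ} (hβ : 0 < β) (ht : 0 ≤ t) :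
    Z (v + fun z => ((t * max (L z - β) 0 : ℝ) : EReal)) = Z v := by
  set H := {z | L z ≤ β}
  set x := v + fun z => ((t * max (β - L z) 0 : ℝ) : EReal)
  set y := v + convexIndicator H
  have hx : x ∈ ConvOd n :=
    ConvOd.add_mem hv (by simpa [neg_add_eq_sub] using ConvOd.coe_ramp_mem (-L) (-β) ht)
  have hy : y ∈ ConvOd n := ConvOd.add_mem hv (ConvOd.convexIndicator_halfspace_mem L hβ)
  have hvx : v ≤ x := fun z =>
    le_add_of_nonneg_right (EReal.coe_nonneg.2 (mul_nonneg ht (le_max_right _ _)))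
  have hyH {z} (hz : z ∈ H) : y z = v z := by simp [y, convexIndicator_of_mem hz]
  have hyHc {z} (hz : z ∉ H) : y z = ⊤ := by
    simp [y, convexIndicator_of_notMem hz, EReal.add_top_of_ne_bot (ConvOd.ne_bot hv z)]
  have hinf : x ⊓ y = v := by
    ext z
    by_cases hz : z ∈ H
    · rw [Pi.inf_apply, hyH hz, inf_eq_right.2 (hvx z)]
    · have hzero : max (β - L z) 0 = 0 := max_eq_right (sub_nonpos.2 (lt_of_not_ge hz : β < L z).le)
      rw [Pi.inf_apply, hyHc hz, inf_top_eq]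
      simp only [x, Pi.add_apply, hzero, mul_zero, EReal.coe_zero, add_zero]
  -- On `H` the ramp `t (β - L)⁺` is affine, so `x ⊔ y` is an affine perturbation of `y`.
  have hsup : x ⊔ y = fun z => y z + (((-t) • L) z : EReal) + ((t * β : ℝ) : EReal) := by
    ext z
    by_cases hz : z ∈ H
    · rw [Pi.sup_apply, hyH hz, sup_eq_left.2 (hyH hz ▸ hvx z)]
      have hramp : max (β - L z) 0 = β - L z := max_eq_left (sub_nonneg.2 hz)
      simp only [x, Pi.add_apply, hramp, add_assoc, ← EReal.coe_add]
      congr 2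
      simp only [LinearMap.smul_apply, smul_eq_mul]
      ring
    · rw [Pi.sup_apply, hyHc hz, sup_top_eq, EReal.top_add_coe, EReal.top_add_coe]
  have hZx : Z x = Z v := by
    have h := hval x y hx hy (ConvOd.sup_mem hx hy) (hinf ▸ hv)
    rw [hinf, hsup, hinv y hy] at h
    linarith
  have hright : (v + fun z => ((t * max (L z - β) 0 : ℝ) : EReal)) =
      fun z => x z + ((t • L) z : EReal) + ((-(t * β) : ℝ) : EReal) := by
    ext z
    simp only [x, Pi.add_apply, add_assoc, ← EReal.coe_add]
    congr 2
    simp only [LinearMap.smul_apply, smul_eq_mul]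
    rcases le_total (L z) β with h | h
    · rw [max_eq_right (by linarith), max_eq_left (by linarith)]; ring
    · rw [max_eq_left (by linarith), max_eq_right (by linarith)]; ring
  rw [hright, hinv x hx, hZx]

lemma Z_add_convexIndicator_halfspace (hcont : ContinuousVal (ConvOd n) Z)
    (hval : IsValuation (ConvOd n) Z) (hinv : DuallyEpiTranslationInvariantE (ConvOd n) Z)
    {v : Vn n → EReal} (hv : v ∈ ConvOd n) (L : Vn n →ₗ[ℝ] ℝ) {β : ℝ} (hβ : 0 < β) :
    Z (v + convexIndicator {z | L z ≤ β}) = Z v := by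
  set w : ℕ → Vn n → EReal := fun k => v + fun z => (((k : ℝ) * max (L z - β) 0 : ℝ) : EReal)
  have hw (k : ℕ) : w k ∈ ConvOd n := ConvOd.add_mem hv (ConvOd.coe_ramp_mem L β k.cast_nonneg)
  refine hcont.eq_of_epiConverges hw
    (ConvOd.add_mem hv (ConvOd.convexIndicator_halfspace_mem L hβ))
    (epiConverges_of_monotone (fun k => ConvOd.lowerSemicontinuous (hw k)) ?_ fun z => ?_)
    fun k => Z_add_ramp hval hinv hv L hβ k.cast_nonneg
  · intro k m hkm z
    exact add_le_add le_rfl (EReal.coe_le_coe_iff.2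
      (mul_le_mul_of_nonneg_right (Nat.cast_le.2 hkm) (le_max_right _ _)))
  by_cases hz : L z ≤ β
  · simp [w, convexIndicator_of_mem (s := {z | L z ≤ β}) hz, max_eq_right (sub_nonpos.2 hz)]
  · have hpos : 0 < max (L z - β) 0 := lt_max_of_lt_left (by linarith [lt_of_not_ge hz])
    have hramp : Tendsto (fun k : ℕ => (((k : ℝ) * max (L z - β) 0 : ℝ) : EReal)) atTop (𝓝 ⊤) :=
      EReal.tendsto_coe_nhds_top_iff.2 (tendsto_natCast_atTop_atTop.atTop_mul_const hpos)
    have hadd :=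
      EReal.continuousAt_add (p := (v z, ⊤)) (.inr top_ne_bot) (.inl (ConvOd.ne_bot hv z))
    have h := hadd.tendsto.comp (tendsto_const_nhds.prodMk_nhds hramp)
    rw [Pi.add_apply, convexIndicator_of_notMem (s := {z | L z ≤ β}) hz]
    exact h

lemma Z_add_convexIndicator_polyhedron (hcont : ContinuousVal (ConvOd n) Z)
    (hval : IsValuation (ConvOd n) Z) (hinv : DuallyEpiTranslationInvariantE (ConvOd n) Z)
    (S : Finset (Vn n →ₗ[ℝ] ℝ)) {δ : ℝ} (hδ : 0 < δ) :
    ∀ v ∈ ConvOd n, Z (v + convexIndicator {z | ∀ L ∈ S, L z ≤ δ}) = Z v := by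
  classical
  induction S using Finset.induction_on with
  | empty => simp [convexIndicator_univ]
  | insert L S _ ih =>
    intro v hv
    have hset : {z | ∀ L' ∈ insert L S, L' z ≤ δ} = {z | L z ≤ δ} ∩ {z | ∀ L' ∈ S, L' z ≤ δ} := by
      ext; simp
    rw [hset, convexIndicator_inter, ← add_assoc,
      ih _ (ConvOd.add_mem hv (ConvOd.convexIndicator_halfspace_mem L hδ)),
      Z_add_convexIndicator_halfspace hcont hval hinv hv L hδ]

lemma Z_eq_of_eventuallyEq (hcont : ContinuousVal (ConvOd n) Z)
    (hval : IsValuation (ConvOd n) Z) (hinv : DuallyEpiTranslationInvariantE (ConvOd n) Z)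
    {v w : Vn n → EReal} (hv : v ∈ ConvOd n) (hw : w ∈ ConvOd n) (h : v =ᶠ[𝓝 0] w) :
    Z v = Z w := by
  obtain ⟨ρ, hρ, hball⟩ := Metric.eventually_nhds_iff_ball.1 h
  obtain ⟨S, δ, hδ, hS⟩ := exists_polyhedron_subset_ball (n := n) hρ
  set P := {z | ∀ L ∈ S, L z ≤ δ}
  have hP : v + convexIndicator P = w + convexIndicator P := by
    ext z
    by_cases hz : z ∈ P
    · simp [convexIndicator_of_mem hz, hball z (hS hz)]
    · simp [convexIndicator_of_notMem hz, EReal.add_top_of_ne_bot, ConvOd.ne_bot hv z,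
        ConvOd.ne_bot hw z]
  rw [← Z_add_convexIndicator_polyhedron hcont hval hinv S hδ v hv, hP,
    Z_add_convexIndicator_polyhedron hcont hval hinv S hδ w hw]

lemma Z_eq_of_le_of_eventually_le (hcont : ContinuousVal (ConvOd n) Z)
    (hval : IsValuation (ConvOd n) Z) (hinv : DuallyEpiTranslationInvariantE (ConvOd n) Z)
    {u A : Vn n → EReal} (hu : u ∈ ConvOd n) (hA : A ∈ ConvOd n) (hAu : A ≤ u)
    (hnear : ∀ ε : ℝ, 0 < ε → ∀ᶠ z in 𝓝 0, u z ≤ A z + ε) : Z u = Z A := by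
  set ε : ℕ → ℝ := fun k => 1 / ((k : ℝ) + 1)
  set w : ℕ → Vn n → EReal := fun k => A ⊔ (u + fun _ => ((-ε k : ℝ) : EReal))
  have hw (k : ℕ) : w k ∈ ConvOd n := ConvOd.sup_mem hA
    (ConvOd.add_mem hu (ConvOd.coe_mem (convexOn_const _ convex_univ) continuous_const))
  refine hcont.eq_of_epiConverges hw hu (epiConverges_of_monotone
    (fun k => ConvOd.lowerSemicontinuous (hw k)) (fun k m hkm z => ?_) fun z => ?_) fun k => ?_
  · have hε : ε m ≤ ε k := by simp only [ε]; gcongr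
    exact sup_le_sup_left (add_le_add le_rfl (EReal.coe_le_coe_iff.2 (neg_le_neg hε))) _
  · have hε : Tendsto (fun k => ((-ε k : ℝ) : EReal)) atTop (𝓝 0) := by
      have h := (continuous_coe_real_ereal.tendsto _).comp
        (tendsto_one_div_add_atTop_nhds_zero_nat (𝕜 := ℝ)).neg
      rwa [neg_zero, EReal.coe_zero] at h
    have hadd :=
      EReal.continuousAt_add (p := (u z, 0)) (.inr EReal.zero_ne_bot) (.inl (ConvOd.ne_bot hu z))
    have h := hadd.tendsto.comp (tendsto_const_nhds.prodMk_nhds hε)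
    have hmax := (tendsto_const_nhds (x := A z)).max h
    rwa [add_zero, max_eq_right (hAu z)] at hmax
  · refine Z_eq_of_eventuallyEq hcont hval hinv (hw k) hA ?_
    filter_upwards [hnear (ε k) (by positivity)] with z hz
    refine sup_eq_left.2 ?_
    calc u z + ((-ε k : ℝ) : EReal) ≤ A z + ε k + ((-ε k : ℝ) : EReal) := add_le_add hz le_rfl
      _ = A z := by rw [add_assoc, ← EReal.coe_add, add_neg_cancel, EReal.coe_zero, add_zero]

end Valuation

end

/-- **Triviality on `Conv_od(ℝⁿ)`** (Theorem 9.2): every continuous and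
dually epi-translation invariant valuation on `Conv_od(ℝⁿ)` is constant. -/
theorem constant_on_convOd (n : ℕ) (Z : (Vn n → EReal) → ℝ)
    (hcont : ContinuousVal (ConvOd n) Z)
    (hval : IsValuation (ConvOd n) Z)
    (hinv : DuallyEpiTranslationInvariantE (ConvOd n) Z) :
    ∃ c : ℝ, ∀ u ∈ ConvOd n, Z u = c := by
  have hzero : (fun _ => (0 : EReal)) ∈ ConvOd n := by
    simpa using ConvOd.coe_mem (n := n) (convexOn_const 0 convex_univ) continuous_const
  refine ⟨Z fun _ => 0, fun u hu => ?_⟩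
  obtain ⟨G, hle, hnear⟩ := ConvOd.exists_supporting_affine hu
  set a := (u 0).toReal
  have hA : (fun z => ((a + G z : ℝ) : EReal)) ∈ ConvOd n :=
    ConvOd.coe_mem ((convexOn_const a convex_univ).add (G.convexOn convex_univ))
      (continuous_const.add G.continuous_of_finiteDimensional)
  have hA_eq : (fun z => ((a + G z : ℝ) : EReal)) = fun z => 0 + (G z : EReal) + a := by
    ext z
    rw [zero_add, EReal.coe_add, add_comm]
  rw [Z_eq_of_le_of_eventually_le hcont hval hinv hu hA hle hnear, hA_eq, hinv _ hzero]
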